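/- arXiv:2304.05590 — 6 statements merged into one kernel-verified Lean document; each statement's English description precedes it below -/
import Mathlib

section
/- Let q be a positive integer and n ≥ 1. For a vector x : Fin n → ZMod q, define the masking map M_x : (Fin n → ZMod q) → (Fin n → ZMod q) by (M_x s) i = x i + s i − s (i−1), where the index i−1 is taken cyclically in Fin n. If x, y : Fin n → ZMod q satisfy ∑_i x_i = ∑_i y_i, then the pushforward of the uniform probability distribution on Fin n → ZMod q under M_x equals the pushforward of the uniform probability distribution under M_y; that is, the joint distribution of the masked values reveals nothing about (x_1,…,x_n) beyond their sum. -/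
lemma uniform_map_add_right {α : Type*} [Fintype α] [Nonempty α] [AddGroup α]
    [DecidableEq α] (t : α) :
    (PMF.uniformOfFintype α).map (fun s => s + t) = PMF.uniformOfFintype α := by
  ext b
  rw [PMF.map_apply]
  rw [tsum_eq_single (b - t) (by intro a ha; simp; intro hb; exact absurd (by simp [hb]) ha)]
  simp [PMF.uniformOfFintype_apply]

/-- Perfect privacy of the secure sum protocol: if `x` and `y` have the same sum,
the joint distribution of the masked values (with uniform independent masks)
is the same for `x` and `y`. -/
theorem secure_sum_privacy (q n : ℕ) [NeZero q] [NeZero n] (hn : 1 ≤ n)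
    (x y : Fin n → ZMod q) (h : ∑ i : Fin n, x i = ∑ i : Fin n, y i) :
    (PMF.uniformOfFintype (Fin n → ZMod q)).map
        (fun s => fun i => x i + s i - s (i - 1)) =
      (PMF.uniformOfFintype (Fin n → ZMod q)).map
        (fun s => fun i => y i + s i - s (i - 1)) := by
  classical
  set d : Fin n → ZMod q := fun j => x j - y j with hd
  have hsum : ∑ j : Fin n, d j = 0 := by
    simp [hd, Finset.sum_sub_distrib, h]
  set t : Fin n → ZMod q := fun i => ∑ j : Fin n, if (j : ℕ) ≤ (i : ℕ) then d j else 0 with ht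
  have htval : ∀ i : Fin n, t i = ∑ j : Fin n, if (j : ℕ) ≤ (i : ℕ) then d j else 0 :=
    fun i => rfl
  have htd : ∀ i : Fin n, t i - t (i - 1) = d i := by
    intro i
    by_cases hi : i = 0
    · subst hi
      have h1 : t 0 = d 0 := by
        rw [htval, Finset.sum_eq_single 0]
        · simp
        · intro j _ hj
          rw [if_neg]
          simp only [Fin.val_zero, Nat.le_zero]
          exact fun hz => hj (Fin.ext hz)
        · simp
      have h2 : t (0 - 1) = 0 := by
        rw [htval]
        have hc : ((0 - 1 : Fin n) : ℕ) = n - 1 := by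
          rw [Fin.sub_def]
          simp only [Fin.val_zero, Nat.add_zero, Fin.val_one']
          rcases Nat.lt_or_ge n 2 with h2 | h2
          · interval_cases n; rfl
          · have h1n : 1 % n = 1 := Nat.mod_eq_of_lt (by omega)
            rw [h1n, Nat.mod_eq_of_lt (by omega)]
        rw [← hsum]
        apply Finset.sum_congr rfl
        intro j _
        rw [if_pos]
        rw [hc]
        exact Nat.le_sub_one_of_lt j.isLt
      rw [h1, h2, sub_zero]
    · have hpos : 0 < (i : ℕ) := Nat.pos_of_ne_zero (fun hz => hi (Fin.ext hz))
      have h2 : 2 ≤ n := by have := i.isLt; omega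
      have hv : ((i - 1 : Fin n) : ℕ) = (i : ℕ) - 1 := by
        rw [Fin.sub_def]
        simp only [Fin.val_one']
        have h1n : 1 % n = 1 := Nat.mod_eq_of_lt (by omega)
        have hlt := i.isLt
        rw [h1n, show n - 1 + (i : ℕ) = n + ((i:ℕ) - 1) by omega, Nat.add_mod_left,
          Nat.mod_eq_of_lt (by omega)]
      rw [htval, htval, ← Finset.sum_sub_distrib, Finset.sum_eq_single i]
      · rw [if_pos le_rfl, if_neg (by rw [hv]; omega), sub_zero]
      · intro j _ hj
        have hiff : ((j : ℕ) ≤ (i : ℕ)) ↔ ((j : ℕ) ≤ ((i - 1 : Fin n) : ℕ)) := by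
          rw [hv]
          constructor
          · intro hle
            rcases Nat.lt_or_ge (j : ℕ) (i : ℕ) with hlt | hge
            · omega
            · exact absurd (Fin.ext (le_antisymm hle hge)) hj
          · omega
        by_cases hc : (j : ℕ) ≤ (i : ℕ)
        · rw [if_pos hc, if_pos (hiff.mp hc), sub_self]
        · rw [if_neg hc, if_neg (fun hh => hc (hiff.mpr hh)), sub_self]
      · simp
  have comp : (fun s : Fin n → ZMod q => fun i => y i + s i - s (i - 1)) ∘
      (fun s => s + t) = (fun s => fun i => x i + s i - s (i - 1)) := by
    funext s i
    have hx : x i = y i + (t i - t (i - 1)) := by rw [htd i, hd]; ring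
    simp only [Function.comp_apply, Pi.add_apply]
    rw [hx]; ring
  rw [← comp, ← PMF.map_comp, uniform_map_add_right]
end

section
/- Let q be a prime, let G be a commutative group in which every element satisfies x^q = 1, and let g, C, a ∈ G. Suppose e₁, e₂, z₁, z₂ ∈ ZMod q satisfy e₁ ≠ e₂, g^{(z₁).val} = a · C^{(e₁).val}, and g^{(z₂).val} = a · C^{(e₂).val}. Then C = g^{(((z₁ − z₂) · (e₁ − e₂)⁻¹)).val}, where the inverse is taken in the field ZMod q. -/
/-- Special soundness of the single-generator Schnorr Σ-protocol: from two
accepting transcripts with distinct challenges, a witness exponent for `C`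
can be extracted. -/
theorem schnorr_special_soundness {G : Type*} [CommGroup G]
    (q : ℕ) (hq : Nat.Prime q) (hG : ∀ x : G, x ^ q = 1)
    (g C a : G) (e₁ e₂ z₁ z₂ : ZMod q) (he : e₁ ≠ e₂)
    (h₁ : g ^ (z₁.val) = a * C ^ (e₁.val))
    (h₂ : g ^ (z₂.val) = a * C ^ (e₂.val)) :
    C = g ^ (((z₁ - z₂) * (e₁ - e₂)⁻¹).val) := by
  haveI : Fact (Nat.Prime q) := ⟨hq⟩
  haveI : NeZero q := ⟨hq.ne_zero⟩
  -- powers depend only on exponent mod q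
  have hA : ∀ (x : G) (m n : ℕ), m % q = n % q → x ^ m = x ^ n := by
    intro x m n h
    have key : ∀ k : ℕ, x ^ k = x ^ (k % q) := by
      intro k
      conv_lhs => rw [← Nat.div_add_mod k q]
      rw [pow_add, pow_mul, hG, one_pow, one_mul]
    rw [key m, key n, h]
  have hadd : ∀ (x : G) (u v : ZMod q), x ^ (u.val + v.val) = x ^ ((u + v).val) := by
    intro x u v
    apply hA
    rw [ZMod.val_add, Nat.mod_mod_of_dvd _ dvd_rfl]
  have hmul : ∀ (x : G) (u v : ZMod q), x ^ (u.val * v.val) = x ^ ((u * v).val) := by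
    intro x u v
    apply hA
    rw [ZMod.val_mul, Nat.mod_mod_of_dvd _ dvd_rfl]
  set d := e₁ - e₂ with hd
  set w := (z₁ - z₂) * d⁻¹ with hw
  have hd0 : d ≠ 0 := sub_ne_zero.mpr he
  have hwd : w * d = z₁ - z₂ := by
    rw [hw, mul_assoc, inv_mul_cancel₀ hd0, mul_one]
  -- g^{(z₁-z₂).val} = C^{d.val}
  have hg1 : g ^ ((z₁ - z₂).val) * g ^ (z₂.val) = g ^ (z₁.val) := by
    rw [← pow_add, hadd, sub_add_cancel]
  have hC1 : C ^ (d.val) * C ^ (e₂.val) = C ^ (e₁.val) := by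
    rw [← pow_add, hadd, hd, sub_add_cancel]
  have hkey : g ^ ((z₁ - z₂).val) = C ^ (d.val) := by
    have := hg1
    rw [h₁, h₂, ← hC1] at this
    -- this : g ^ _ * (a * C^e₂.val) = a * (C^d.val * C^e₂.val)
    have h' : g ^ ((z₁ - z₂).val) * (a * C ^ (e₂.val)) =
        C ^ (d.val) * (a * C ^ (e₂.val)) := by
      rw [this]; exact mul_left_comm a _ _
    exact mul_right_cancel h'
  -- (g^{w.val})^{d.val} = C^{d.val}
  have hpow : (g ^ (w.val)) ^ (d.val) = C ^ (d.val) := by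
    rw [← pow_mul, hmul, hwd, hkey]
  -- injectivity of x ↦ x^{d.val}
  have hdval0 : d.val ≠ 0 := fun h => hd0 (by
    have := ZMod.val_eq_zero d |>.mp h
    exact this)
  have hcop : Nat.Coprime d.val q := by
    apply Nat.Coprime.symm
    exact (Nat.Prime.coprime_iff_not_dvd hq).mpr
      (fun hdvd => hdval0 (Nat.eq_zero_of_dvd_of_lt hdvd (ZMod.val_lt d)))
  have hu : (C / g ^ (w.val)) = 1 := by
    have h1 : (C / g ^ (w.val)) ^ (d.val) = 1 := by
      rw [div_pow, hpow, div_self']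
    have h2 : orderOf (C / g ^ (w.val)) ∣ Nat.gcd d.val q :=
      Nat.dvd_gcd (orderOf_dvd_of_pow_eq_one h1) (orderOf_dvd_of_pow_eq_one (hG _))
    rw [Nat.Coprime.gcd_eq_one hcop, Nat.dvd_one, orderOf_eq_one_iff] at h2
    exact h2
  have := div_eq_one.mp hu
  rw [hw, hd] at this
  exact this
end

section
/- Let q be a prime, let G be a commutative group in which every element satisfies x^q = 1, let n ≥ 1, let g : Fin n → G, and let C, a ∈ G. Suppose e, e' ∈ ZMod q with e ≠ e' and z, z' : Fin n → ZMod q satisfy ∏_{i} (g i)^{(z i).val} = a · C^{e.val} and ∏_{i} (g i)^{(z' i).val} = a · C^{e'.val}. Then C = ∏_{i} (g i)^{(((z i − z' i) · (e − e')⁻¹)).val}, where the inverse is taken in the field ZMod q. -/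
lemma pow_val_congr {G : Type*} [CommGroup G] {q : ℕ} (x : G) (hx : x ^ q = 1)
    {m k : ℕ} (h : m ≡ k [MOD q]) : x ^ m = x ^ k := by
  have hd : orderOf x ∣ q := orderOf_dvd_of_pow_eq_one hx
  exact (pow_eq_pow_iff_modEq).2 (h.of_dvd hd)

lemma pow_val_mul {G : Type*} [CommGroup G] {q : ℕ} (x : G) (hx : x ^ q = 1)
    (u v : ZMod q) : x ^ ((u * v).val) = (x ^ u.val) ^ v.val := by
  rw [← pow_mul]
  exact pow_val_congr x hx (ZMod.val_mul u v ▸ (Nat.mod_modEq _ q))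

lemma pow_val_add {G : Type*} [CommGroup G] {q : ℕ} [NeZero q] (x : G) (hx : x ^ q = 1)
    (u v : ZMod q) : x ^ ((u + v).val) = x ^ u.val * x ^ v.val := by
  rw [← pow_add]
  exact pow_val_congr x hx (ZMod.val_add u v ▸ (Nat.mod_modEq _ q))

/-- Special soundness of the multi-base Σ-protocol generating the proof s¹. -/
theorem multibase_special_soundness {G : Type*} [CommGroup G]
    (q : ℕ) (hq : Nat.Prime q) (hG : ∀ x : G, x ^ q = 1)
    (n : ℕ) (hn : 1 ≤ n) (g : Fin n → G) (C a : G)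
    (e e' : ZMod q) (he : e ≠ e') (z z' : Fin n → ZMod q)
    (h₁ : ∏ i : Fin n, (g i) ^ ((z i).val) = a * C ^ (e.val))
    (h₂ : ∏ i : Fin n, (g i) ^ ((z' i).val) = a * C ^ (e'.val)) :
    C = ∏ i : Fin n, (g i) ^ (((z i - z' i) * (e - e')⁻¹).val) := by
  haveI : Fact q.Prime := ⟨hq⟩
  haveI : NeZero q := ⟨hq.pos.ne'⟩
  haveI : Fact (1 < q) := ⟨hq.one_lt⟩
  set d := e - e' with hd
  have hdne : d ≠ 0 := sub_ne_zero.2 he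
  have hCe : C ^ e.val = C ^ d.val * C ^ e'.val := by
    rw [← pow_val_add C (hG C) d e']
    congr 1
    rw [hd, sub_add_cancel]
  have hD : ∏ i : Fin n, (g i) ^ ((z i - z' i).val) = C ^ d.val := by
    have : ∏ i : Fin n, (g i) ^ ((z i - z' i).val)
        = (∏ i : Fin n, (g i) ^ ((z i).val)) / (∏ i : Fin n, (g i) ^ ((z' i).val)) := by
      rw [← Finset.prod_div_distrib]
      refine Finset.prod_congr rfl fun i _ => ?_
      have : (g i) ^ ((z i).val) = (g i) ^ ((z i - z' i).val) * (g i) ^ ((z' i).val) := by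
        rw [← pow_val_add (g i) (hG (g i))]
        congr 1
        rw [sub_add_cancel]
      rw [this, mul_div_cancel_right]
    rw [this, h₁, h₂, hCe]
    rw [mul_left_comm, mul_div_cancel_right]
  have hinv : d * d⁻¹ = 1 := mul_inv_cancel₀ hdne
  calc C = C ^ ((1 : ZMod q).val) := by rw [ZMod.val_one, pow_one]
    _ = C ^ ((d * d⁻¹).val) := by rw [hinv]
    _ = (C ^ d.val) ^ (d⁻¹).val := pow_val_mul C (hG C) d d⁻¹
    _ = (∏ i : Fin n, (g i) ^ ((z i - z' i).val)) ^ (d⁻¹).val := by rw [hD]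
    _ = ∏ i : Fin n, ((g i) ^ ((z i - z' i).val)) ^ (d⁻¹).val := by
        rw [← Finset.prod_pow]
    _ = ∏ i : Fin n, (g i) ^ (((z i - z' i) * d⁻¹).val) := by
        refine Finset.prod_congr rfl fun i _ => ?_
        rw [pow_val_mul (g i) (hG (g i))]
end

section
/- Let q be a prime, let G be a commutative group in which every element satisfies x^q = 1, let g₁, g₂, a₁, a₂, a₃ ∈ G and C₁, C₂ ∈ G. Suppose e, e' ∈ ZMod q with e ≠ e' and z₁, z₂, z₁', z₂' ∈ ZMod q satisfy the four verification equations g₁^{(z₁).val} = a₁ · C₁^{e.val}, g₂^{(z₁+z₂).val} = a₂ · a₃ · C₂^{e.val}, g₁^{(z₁').val} = a₁ · C₁^{e'.val}, and g₂^{(z₁'+z₂').val} = a₂ · a₃ · C₂^{e'.val}. Then C₁ = g₁^{(((z₁ − z₁') · (e − e')⁻¹)).val} and C₂ = g₂^{((((z₁ + z₂) − (z₁' + z₂')) · (e − e')⁻¹)).val}. -/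
/-- Special soundness of the two-generator Σ-protocol generating the proof s³. -/
theorem s3_special_soundness {G : Type*} [CommGroup G]
    (q : ℕ) (hq : Nat.Prime q) (hG : ∀ x : G, x ^ q = 1)
    (g₁ g₂ a₁ a₂ a₃ C₁ C₂ : G)
    (e e' : ZMod q) (he : e ≠ e') (z₁ z₂ z₁' z₂' : ZMod q)
    (h₁ : g₁ ^ (z₁.val) = a₁ * C₁ ^ (e.val))
    (h₂ : g₂ ^ ((z₁ + z₂).val) = a₂ * a₃ * C₂ ^ (e.val))
    (h₃ : g₁ ^ (z₁'.val) = a₁ * C₁ ^ (e'.val))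
    (h₄ : g₂ ^ ((z₁' + z₂').val) = a₂ * a₃ * C₂ ^ (e'.val)) :
    C₁ = g₁ ^ (((z₁ - z₁') * (e - e')⁻¹).val) ∧
      C₂ = g₂ ^ ((((z₁ + z₂) - (z₁' + z₂')) * (e - e')⁻¹).val) := by
  haveI : Fact (Nat.Prime q) := ⟨hq⟩
  have hmod : ∀ (x : G) (n : ℕ), x ^ n = x ^ (n % q) := by
    intro x n
    conv_lhs => rw [← Nat.div_add_mod n q]
    rw [pow_add, pow_mul, hG, one_pow, one_mul]
  have hadd : ∀ (x : G) (a b : ZMod q), x ^ (a + b).val = x ^ a.val * x ^ b.val := by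
    intro x a b
    rw [ZMod.val_add, ← hmod, pow_add]
  have hmul : ∀ (x : G) (a b : ZMod q), x ^ (a * b).val = (x ^ a.val) ^ b.val := by
    intro x a b
    rw [ZMod.val_mul, ← hmod, pow_mul]
  have hd : (e - e') ≠ 0 := sub_ne_zero.mpr he
  have key : ∀ (g C A : G) (z z' : ZMod q), g ^ z.val = A * C ^ e.val →
      g ^ z'.val = A * C ^ e'.val → C = g ^ (((z - z') * (e - e')⁻¹).val) := by
    intro g C A z z' hz hz'
    have hg : g ^ ((z - z').val) = C ^ ((e - e').val) := by
      have h1 : g ^ ((z - z').val) * g ^ (z'.val) = g ^ (z.val) := by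
        rw [← hadd, sub_add_cancel]
      have h2 : C ^ ((e - e').val) * C ^ (e'.val) = C ^ (e.val) := by
        rw [← hadd, sub_add_cancel]
      rw [hz, hz', ← h2] at h1
      exact mul_right_cancel (h1.trans (mul_left_comm _ _ _))
    calc C = C ^ (((e - e') * (e - e')⁻¹).val) := by
            rw [mul_inv_cancel₀ hd, ZMod.val_one, pow_one]
      _ = (C ^ ((e - e').val)) ^ ((e - e')⁻¹.val) := hmul C _ _
      _ = (g ^ ((z - z').val)) ^ ((e - e')⁻¹.val) := by rw [hg]
      _ = g ^ (((z - z') * (e - e')⁻¹).val) := (hmul g _ _).symm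
  exact ⟨key g₁ C₁ a₁ z₁ z₁' h₁ h₃, key g₂ C₂ (a₂ * a₃) _ _ h₂ h₄⟩
end

section
/- Let q be a prime, let G be a commutative group in which every element satisfies x^q = 1, let g ∈ G, let c ∈ ZMod q, set C = g^{c.val}, and fix a challenge e ∈ ZMod q. Then the pushforward of the uniform probability distribution on ZMod q under the honest-prover map r ↦ (g^{r.val}, r + e·c) equals the pushforward of the uniform probability distribution on ZMod q under the simulator map z ↦ (g^{z.val} · (C^{e.val})⁻¹, z). -/
lemma pow_val_eq {G : Type*} [CommGroup G] (q : ℕ) [NeZero q]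
    (hG : ∀ x : G, x ^ q = 1) (g : G) (a b : ℕ) (h : a ≡ b [MOD q]) :
    g ^ a = g ^ b := by
  have hd : orderOf g ∣ q := orderOf_dvd_of_pow_eq_one (hG g)
  exact (pow_eq_pow_iff_modEq).2 (h.of_dvd hd)

/-- Honest-verifier zero-knowledge of the Schnorr-type Σ-protocols: the honest
transcript distribution equals the simulated transcript distribution. -/
theorem schnorr_hvzk {G : Type*} [CommGroup G]
    (q : ℕ) (hq : Nat.Prime q) [NeZero q] (hG : ∀ x : G, x ^ q = 1)
    (g : G) (c : ZMod q) (C : G) (hC : C = g ^ (c.val)) (e : ZMod q) :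
    (PMF.uniformOfFintype (ZMod q)).map
        (fun r => ((g ^ (r.val), r + e * c) : G × ZMod q)) =
      (PMF.uniformOfFintype (ZMod q)).map
        (fun z => ((g ^ (z.val) * (C ^ (e.val))⁻¹, z) : G × ZMod q)) := by
  -- Step 1: shift invariance of uniform
  have hshift : (PMF.uniformOfFintype (ZMod q)).map (fun r => r + e * c)
      = PMF.uniformOfFintype (ZMod q) := by
    ext b
    rw [PMF.map_apply, PMF.uniformOfFintype_apply]
    rw [tsum_eq_single (b - e * c) (by
      intro a ha; simp only [ite_eq_right_iff]; intro h
      exact absurd (by rw [h]; ring) ha)]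
    simp [sub_add_cancel, eq_comm]
  -- Step 2: the honest map factors through the shift
  have hfun : (fun r : ZMod q => ((g ^ (r.val), r + e * c) : G × ZMod q))
      = (fun z : ZMod q => ((g ^ (z.val) * (C ^ (e.val))⁻¹, z) : G × ZMod q))
        ∘ (fun r => r + e * c) := by
    funext r
    simp only [Function.comp_apply, Prod.mk.injEq, and_true]
    have h1 : g ^ ((r + e * c).val) = g ^ (r.val + (e * c).val) := by
      apply pow_val_eq q hG
      have h := ZMod.val_add r (e * c)
      simp [Nat.ModEq, h, Nat.mod_mod]
    have h2 : (C : G) ^ (e.val) = g ^ ((e * c).val) := by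
      rw [hC, ← pow_mul]
      apply pow_val_eq q hG
      have h := ZMod.val_mul e c
      simp [Nat.ModEq, h, Nat.mod_mod, Nat.mul_comm]
    rw [h1, h2, pow_add, mul_inv_cancel_right]
  rw [hfun, ← PMF.map_comp, hshift]
end

section
/- Let p and q be distinct primes, let n = p·q, and let λ = lcm(p − 1, q − 1). Let x be a natural number (the plaintext), let r be a natural number coprime to n (the randomness), and let c be a natural number with c ≡ (1 + n)^x · r^n (mod n²). Then c^{λ} ≡ 1 + λ·x·n (mod n²). -/
/-- Binomial: `(1+n)^k ≡ 1 + k·n (mod n²)`. -/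
lemma paillier_binom (n k : ℕ) : (1 + n) ^ k ≡ 1 + k * n [MOD n ^ 2] := by
  induction k with
  | zero => simpa using Nat.ModEq.refl 1
  | succ k ih =>
    calc (1 + n) ^ (k + 1) = (1 + n) ^ k * (1 + n) := by ring
      _ ≡ (1 + k * n) * (1 + n) [MOD n ^ 2] := ih.mul_right _
      _ = (1 + (k + 1) * n) + k * n ^ 2 := by ring
      _ ≡ (1 + (k + 1) * n) + 0 [MOD n ^ 2] := by
          exact Nat.ModEq.add_left _ ((Nat.modEq_zero_iff_dvd).mpr ⟨k, mul_comm _ _⟩)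
      _ = 1 + (k + 1) * n := by ring

/-- `r^(nλ) ≡ 1 mod p²` when `p(p-1) ∣ nλ` and `r` coprime to `p`. -/
lemma paillier_unit (p r m : ℕ) (hp : Nat.Prime p)
    (hr : Nat.Coprime r p) (hdvd : p * (p - 1) ∣ m) :
    r ^ m ≡ 1 [MOD p ^ 2] := by
  obtain ⟨t, ht⟩ := hdvd
  have htot : Nat.totient (p ^ 2) = p * (p - 1) := by
    rw [Nat.totient_prime_pow hp (by norm_num)]; ring_nf
  have heuler : r ^ (p * (p - 1)) ≡ 1 [MOD p ^ 2] := by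
    rw [← htot]
    exact Nat.ModEq.pow_totient (hr.pow_right 2)
  calc r ^ m = (r ^ (p * (p - 1))) ^ t := by rw [ht, pow_mul]
    _ ≡ 1 ^ t [MOD p ^ 2] := heuler.pow t
    _ = 1 := one_pow t

/-- Decryption correctness of Paillier: `c = (1+n)^x · r^n mod n²` satisfies
`c^λ ≡ 1 + λxn (mod n²)`. -/
theorem paillier_decryption (p q : ℕ) (hp : Nat.Prime p) (hq : Nat.Prime q)
    (hpq : p ≠ q) (n lam : ℕ) (hn : n = p * q)
    (hlam : lam = Nat.lcm (p - 1) (q - 1))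
    (x r c : ℕ) (hr : Nat.Coprime r n)
    (hc : c ≡ (1 + n) ^ x * r ^ n [MOD n ^ 2]) :
    c ^ lam ≡ 1 + lam * x * n [MOD n ^ 2] := by
  have hrp : Nat.Coprime r p := by
    have := hr; rw [hn] at this; exact this.coprime_dvd_right ⟨q, rfl⟩
  have hrq : Nat.Coprime r q := by
    have := hr; rw [hn] at this; exact this.coprime_dvd_right ⟨p, mul_comm p q⟩
  -- divisibilities
  have hdp : p * (p - 1) ∣ n * lam := by
    rw [hn, hlam]
    exact mul_dvd_mul ⟨q, rfl⟩ (Nat.dvd_lcm_left _ _)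
  have hdq : q * (q - 1) ∣ n * lam := by
    rw [hn, hlam]
    exact mul_dvd_mul ⟨p, mul_comm p q⟩ (Nat.dvd_lcm_right _ _)
  have h1 : r ^ (n * lam) ≡ 1 [MOD p ^ 2] := paillier_unit p r _ hp hrp hdp
  have h2 : r ^ (n * lam) ≡ 1 [MOD q ^ 2] := paillier_unit q r _ hq hrq hdq
  have hcop : Nat.Coprime (p ^ 2) (q ^ 2) :=
    Nat.Coprime.pow 2 2 ((Nat.coprime_primes hp hq).mpr hpq)
  have hmul : r ^ (n * lam) ≡ 1 [MOD p ^ 2 * q ^ 2] :=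
    (Nat.modEq_and_modEq_iff_modEq_mul hcop).mp ⟨h1, h2⟩
  have hrn : r ^ (n * lam) ≡ 1 [MOD n ^ 2] := by
    rw [hn, mul_pow]; rw [hn] at hmul; exact hmul
  calc c ^ lam ≡ ((1 + n) ^ x * r ^ n) ^ lam [MOD n ^ 2] := hc.pow lam
    _ = (1 + n) ^ (x * lam) * r ^ (n * lam) := by
        rw [mul_pow, ← pow_mul, ← pow_mul]
    _ ≡ (1 + (x * lam) * n) * 1 [MOD n ^ 2] :=
        (paillier_binom n (x * lam)).mul hrn
    _ = 1 + lam * x * n := by ring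
end
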